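/- arXiv:1304.7617 — 2 statements merged into one kernel-verified Lean document; each statement's English description precedes it below -/
import Mathlib

section
/- The map π is multiplicative: for all Φ, Ψ ∈ S^c, π(Φ★Ψ) = π(Φ) ∘ π(Ψ) as operators on L²(ℝ × 𝕋 × ℤ). -/
open MeasureTheory Complex

noncomputable section

/-- `e x = exp (2 π i x)`. -/
def expi (x : ℝ) : ℂ := Complex.exp (2 * Real.pi * Complex.I * x)

/-- Partial derivative in the first variable. -/
def pdX (f : ℝ → ℝ → ℂ) : ℝ → ℝ → ℂ := fun x y => deriv (fun x' => f x' y) x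

/-- Partial derivative in the second variable. -/
def pdY (f : ℝ → ℝ → ℂ) : ℝ → ℝ → ℂ := fun x y => deriv (fun y' => f x y') y

/-- The space `S^c`: smooth functions on `ℝ × 𝕋 × ℤ` (a function on the torus `𝕋`
is identified with a `1`-periodic function on `ℝ`) satisfying the quasi-periodicity
relation `Φ(x+k,y,p) = e(ckpy) Φ(x,y,p)` for `k ∈ ℤ`, together with the
Schwartz-type bounds: for every polynomial `P` on `ℤ`, all partial derivatives
`X̃ = ∂^{m+n}/∂x^m ∂y^n` and every compact `K ⊆ ℝ × 𝕋`, the function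
`P(p)(X̃Φ)(x,y,p)` is bounded on `K × ℤ`. -/
def IsSc (c : ℕ) (Φ : ℝ → ℝ → ℤ → ℂ) : Prop :=
  (∀ p : ℤ, ContDiff ℝ (⊤ : ℕ∞) (fun xy : ℝ × ℝ => Φ xy.1 xy.2 p)) ∧
  (∀ (x y : ℝ) (p : ℤ), Φ x (y + 1) p = Φ x y p) ∧
  (∀ (k : ℤ) (x y : ℝ) (p : ℤ),
    Φ (x + k) y p = expi ((c : ℝ) * (k : ℝ) * (p : ℝ) * y) * Φ x y p) ∧
  (∀ (P : Polynomial ℤ) (m n : ℕ) (K : Set (ℝ × ℝ)), IsCompact K →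
    ∃ C : ℝ, ∀ (x y : ℝ) (p : ℤ), (x, y) ∈ K →
      ‖((P.eval p : ℤ) : ℂ) * pdX^[m] (pdY^[n] (fun x' y' => Φ x' y' p)) x y‖ ≤ C)

/-- The product `★` of the quantum Heisenberg manifold. -/
def starProd (hbar μ ν : ℝ) (Φ Ψ : ℝ → ℝ → ℤ → ℂ) : ℝ → ℝ → ℤ → ℂ :=
  fun x y p => ∑' q : ℤ,
    Φ (x - hbar * ((q : ℝ) - (p : ℝ)) * μ) (y - hbar * ((q : ℝ) - (p : ℝ)) * ν) q *
      Ψ (x - hbar * (q : ℝ) * μ) (y - hbar * (q : ℝ) * ν) (p - q)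

/-- The involution `Φ*(x,y,p) = conj (Φ(x,y,-p))`. -/
def invol (Φ : ℝ → ℝ → ℤ → ℂ) : ℝ → ℝ → ℤ → ℂ :=
  fun x y p => starRingEnd ℂ (Φ x y (-p))

/-- The group multiplication on `G = ℝ³`: `(r,s,t)(r',s',t') = (r+r', s+s', t+t'+csr')`. -/
def heisMul (c : ℕ) (g h : ℝ × ℝ × ℝ) : ℝ × ℝ × ℝ :=
  (g.1 + h.1, g.2.1 + h.2.1, g.2.2 + h.2.2 + (c : ℝ) * g.2.1 * h.1)

/-- The action of `G = ℝ³` on `S^c`. -/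
def Lact (c : ℕ) (g : ℝ × ℝ × ℝ) (Φ : ℝ → ℝ → ℤ → ℂ) : ℝ → ℝ → ℤ → ℂ :=
  fun x y p =>
    expi ((p : ℝ) * (g.2.2 + (c : ℝ) * g.2.1 * (x - g.1))) * Φ (x - g.1) (y - g.2.1) p

/-- The trace `τ(Φ) = ∫₀¹ ∫_𝕋 Φ(x,y,0) dy dx`. -/
def tauQHM (Φ : ℝ → ℝ → ℤ → ℂ) : ℂ := ∫ x in (0:ℝ)..1, ∫ y in (0:ℝ)..1, Φ x y 0

/-- The derivation `d₁(Φ) = -∂Φ/∂x`. -/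
def d1 (Φ : ℝ → ℝ → ℤ → ℂ) : ℝ → ℝ → ℤ → ℂ :=
  fun x y p => - deriv (fun x' => Φ x' y p) x

/-- The derivation `d₂(Φ)(x,y,p) = 2πicpx·Φ(x,y,p) - ∂Φ/∂y(x,y,p)`. -/
def d2 (c : ℕ) (Φ : ℝ → ℝ → ℤ → ℂ) : ℝ → ℝ → ℤ → ℂ :=
  fun x y p => ((2 * Real.pi * (c : ℝ) * (p : ℝ) * x : ℝ) : ℂ) * Complex.I * Φ x y p -
    deriv (fun y' => Φ x y' p) y

/-- The derivation `d₃(Φ)(x,y,p) = 2πipcα·Φ(x,y,p)`. -/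
def d3 (c : ℕ) (α : ℝ) (Φ : ℝ → ℝ → ℤ → ℂ) : ℝ → ℝ → ℤ → ℂ :=
  fun x y p => ((2 * Real.pi * (p : ℝ) * (c : ℝ) * α : ℝ) : ℂ) * Complex.I * Φ x y p

/-- The measure on `ℝ × 𝕋 × ℤ`, the torus being identified with `[0,1)`:
Lebesgue measure on `ℝ`, Lebesgue measure restricted to `[0,1)`, and
counting measure on `ℤ`. -/
def μQHM : Measure (ℝ × ℝ × ℤ) :=
  (volume : Measure ℝ).prod
    (((volume : Measure ℝ).restrict (Set.Ico (0:ℝ) 1)).prod Measure.count)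

/-- `RepOf hbar μ ν Φ T` says that the bounded operator `T` on `L²(ℝ × 𝕋 × ℤ)` is
given by the formula `(π(Φ)ξ)(x,y,p) = Σ_q Φ(x-hbar(q-2p)μ, y-hbar(q-2p)ν, q) ξ(x,y,p-q)`. -/
def RepOf (hbar μ ν : ℝ) (Φ : ℝ → ℝ → ℤ → ℂ) (T : Lp ℂ 2 μQHM →L[ℂ] Lp ℂ 2 μQHM) : Prop :=
  ∀ ξ : Lp ℂ 2 μQHM,
    (T ξ : ℝ × ℝ × ℤ → ℂ) =ᵐ[μQHM]
      fun w => ∑' q : ℤ,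
        Φ (w.1 - hbar * ((q : ℝ) - 2 * (w.2.2 : ℝ)) * μ)
            (w.2.1 - hbar * ((q : ℝ) - 2 * (w.2.2 : ℝ)) * ν) q *
          (ξ : ℝ × ℝ × ℤ → ℂ) (w.1, w.2.1, w.2.2 - q)

open scoped ENNReal NNReal

lemma norm_expi (t : ℝ) : ‖expi t‖ = 1 := by
  have h : (2 * (Real.pi:ℂ) * Complex.I * (t:ℝ)) = ((2 * Real.pi * t : ℝ) : ℂ) * Complex.I := by
    push_cast; ring
  rw [expi, h, Complex.norm_exp_ofReal_mul_I]

lemma summable_inv_one_add_sq : Summable (fun n : ℤ => ((1:ℝ) + (n:ℝ)^2)⁻¹) := by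
  have h : Summable (fun n : ℤ => 1 / (n:ℝ)^2) := Real.summable_one_div_int_pow.2 one_lt_two
  refine h.of_norm_bounded_eventually ?_
  rw [Filter.eventually_cofinite]
  refine Set.Finite.subset (Set.finite_singleton 0) ?_
  intro n hn
  simp only [Set.mem_setOf_eq, not_le] at hn
  by_contra h0
  have hn0 : (n:ℝ) ≠ 0 := Int.cast_ne_zero.2 (by simpa using h0)
  have h1 : (0:ℝ) < (n:ℝ)^2 := by positivity
  have h2 : ‖((1:ℝ) + (n:ℝ)^2)⁻¹‖ = ((1:ℝ) + (n:ℝ)^2)⁻¹ := by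
    rw [Real.norm_eq_abs, _root_.abs_of_nonneg (by positivity)]
  rw [h2, one_div] at hn
  have h3 : ((1:ℝ) + (n:ℝ)^2)⁻¹ ≤ ((n:ℝ)^2)⁻¹ := by
    apply inv_anti₀ h1; linarith
  linarith

lemma summable_base : Summable (fun v : ℤ × ℤ =>
    ((1:ℝ) + (v.2:ℝ)^2)⁻¹ * ((1:ℝ) + (((v.1 - v.2 : ℤ)):ℝ)^2)⁻¹) := by
  have hg : Summable (fun n : ℤ => ((1:ℝ) + (n:ℝ)^2)⁻¹) := summable_inv_one_add_sq
  have h0 : Summable (fun v : ℤ × ℤ => ((1:ℝ)+(v.1:ℝ)^2)⁻¹ * ((1:ℝ)+(v.2:ℝ)^2)⁻¹) :=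
    hg.mul_of_nonneg hg (fun n => by positivity) (fun n => by positivity)
  have hinj : Function.Injective (fun v : ℤ × ℤ => ((v.2, v.1 - v.2) : ℤ × ℤ)) := by
    rintro ⟨a,b⟩ ⟨c,d⟩ h
    simp only [Prod.mk.injEq, Prod.ext_iff] at h ⊢
    omega
  have h1 := h0.comp_injective hinj
  exact h1.congr (fun v => rfl)

lemma Sc_bound {c : ℕ} {Φ : ℝ → ℝ → ℤ → ℂ} (hΦ : IsSc c Φ) :
    ∃ C : ℝ, 0 ≤ C ∧ ∀ (x y : ℝ) (p : ℤ), ‖Φ x y p‖ ≤ C * ((1:ℝ) + (p:ℝ)^2)⁻¹ := by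
  obtain ⟨hsm, hper, hqp, hbd⟩ := hΦ
  obtain ⟨C, hC⟩ := hbd (Polynomial.C 1 + Polynomial.X ^ 2) 0 0
    (Set.Icc (0:ℝ) 1 ×ˢ Set.Icc (0:ℝ) 1) (isCompact_Icc.prod isCompact_Icc)
  refine ⟨max C 0, le_max_right _ _, fun x y p => ?_⟩
  have h1 : Φ x y p = expi ((c:ℝ) * ((⌊x⌋ : ℤ):ℝ) * (p:ℝ) * y) * Φ (Int.fract x) y p := by
    have h := hqp ⌊x⌋ (Int.fract x) y p
    rwa [Int.fract_add_floor] at h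
  have h2 : Φ (Int.fract x) (Int.fract y) p = Φ (Int.fract x) y p := by
    have hp1 : Function.Periodic (fun y' => Φ (Int.fract x) y' p) 1 := fun y' => hper _ y' p
    have h3 := hp1.sub_int_mul_eq (x := y) ⌊y⌋
    simp only [mul_one] at h3
    exact h3
  have hnorm : ‖Φ x y p‖ = ‖Φ (Int.fract x) (Int.fract y) p‖ := by
    rw [h1, norm_mul, norm_expi, one_mul, h2]
  have hmem : (Int.fract x, Int.fract y) ∈ Set.Icc (0:ℝ) 1 ×ˢ Set.Icc (0:ℝ) 1 :=
    ⟨⟨Int.fract_nonneg x, (Int.fract_lt_one x).le⟩, ⟨Int.fract_nonneg y, (Int.fract_lt_one y).le⟩⟩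
  have hb := hC (Int.fract x) (Int.fract y) p hmem
  simp only [Function.iterate_zero, id_eq] at hb
  have heval : ((Polynomial.C 1 + Polynomial.X ^ 2 : Polynomial ℤ).eval p) = 1 + p^2 := by simp
  rw [heval, norm_mul] at hb
  have hcast : ‖((1 + p^2 : ℤ) : ℂ)‖ = 1 + (p:ℝ)^2 := by
    have h : ((1 + p^2 : ℤ) : ℂ) = ((1 + (p:ℝ)^2 : ℝ) : ℂ) := by push_cast; ring
    rw [h, Complex.norm_real, Real.norm_eq_abs, _root_.abs_of_nonneg (by positivity)]
  rw [hcast] at hb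
  have hpos : (0:ℝ) < 1 + (p:ℝ)^2 := by positivity
  rw [hnorm]
  have h4 : ‖Φ (Int.fract x) (Int.fract y) p‖ * (1 + (p:ℝ)^2) ≤ max C 0 := by
    calc ‖Φ (Int.fract x) (Int.fract y) p‖ * (1 + (p:ℝ)^2)
        = (1 + (p:ℝ)^2) * ‖Φ (Int.fract x) (Int.fract y) p‖ := by ring
      _ ≤ C := hb
      _ ≤ max C 0 := le_max_left _ _
  calc ‖Φ (Int.fract x) (Int.fract y) p‖
      = ‖Φ (Int.fract x) (Int.fract y) p‖ * (1 + (p:ℝ)^2) * (1 + (p:ℝ)^2)⁻¹ := by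
        field_simp
    _ ≤ max C 0 * (1 + (p:ℝ)^2)⁻¹ := by
        exact mul_le_mul_of_nonneg_right h4 (by positivity)

instance countSigmaFinite : SigmaFinite (Measure.count : Measure ℤ) := by
  refine ⟨⟨⟨fun n => ((Finset.Icc (-(n:ℤ)) (n:ℤ) : Finset ℤ) : Set ℤ), fun _ => trivial,
    fun n => ?_, ?_⟩⟩⟩
  · rw [Measure.count_apply_finset]
    exact ENNReal.natCast_lt_top _
  · ext m
    simp only [Set.mem_iUnion, Set.mem_univ, iff_true, Finset.coe_Icc, Set.mem_Icc]
    exact ⟨m.natAbs, by omega, by omega⟩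

lemma map_count_add (k : ℤ) :
    Measure.map (fun n : ℤ => n + k) Measure.count = Measure.count := by
  ext s hs
  rw [Measure.map_apply (measurable_add_const k) hs]
  have himg : (fun n : ℤ => n + k) ⁻¹' s = (fun n : ℤ => n - k) '' s := by
    ext n
    simp only [Set.mem_preimage, Set.mem_image]
    constructor
    · intro h; exact ⟨n + k, h, by ring⟩
    · rintro ⟨m, hm, rfl⟩; simpa [sub_add_cancel] using hm
  rw [himg, Measure.count_injective_image (fun a b h => by omega)]

lemma shift_mp (k : ℤ) :
    MeasurePreserving (fun w : ℝ × ℝ × ℤ => (w.1, w.2.1, w.2.2 + k)) μQHM μQHM := by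
  have h1 : MeasurePreserving (fun n : ℤ => n + k) Measure.count Measure.count :=
    ⟨measurable_add_const k, map_count_add k⟩
  have h2 := (MeasurePreserving.id
    ((volume : Measure ℝ).restrict (Set.Ico (0:ℝ) 1))).prod h1
  exact (MeasurePreserving.id (volume : Measure ℝ)).prod h2

lemma ae_shift {f g : ℝ × ℝ × ℤ → ℂ} (h : f =ᵐ[μQHM] g) :
    ∀ᵐ w ∂μQHM, ∀ n : ℤ, f (w.1, w.2.1, n) = g (w.1, w.2.1, n) := by
  have H : ∀ᵐ w ∂μQHM, ∀ k : ℤ, f (w.1, w.2.1, w.2.2 + k) = g (w.1, w.2.1, w.2.2 + k) := by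
    rw [ae_all_iff]
    intro k
    exact (shift_mp k).quasiMeasurePreserving.ae_eq_comp h
  filter_upwards [H] with w hw n
  have h1 := hw (n - w.2.2)
  have h2 : w.2.2 + (n - w.2.2) = n := by omega
  rwa [h2] at h1

lemma ae_slice_bound (ξ : Lp ℂ 2 μQHM) :
    ∀ᵐ w ∂μQHM, ∃ M : ℝ, ∀ n : ℤ, ‖(ξ : ℝ × ℝ × ℤ → ℂ) (w.1, w.2.1, n)‖ ≤ M := by
  obtain ⟨G, hGm, hξG⟩ := (Lp.aestronglyMeasurable ξ)
  set F : ℝ × ℝ × ℤ → ℝ≥0∞ := fun w => (‖G w‖₊ : ℝ≥0∞) ^ (2:ℕ) with hF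
  have hFm : Measurable F := (hGm.measurable.enorm).pow_const 2
  have hint : ∫⁻ w, F w ∂μQHM ≠ ⊤ := by
    have h1 : eLpNorm G 2 μQHM < ⊤ := by
      rw [← eLpNorm_congr_ae hξG]
      exact Lp.eLpNorm_lt_top ξ
    have h2 := lintegral_rpow_enorm_lt_top_of_eLpNorm_lt_top (f := G)
      (by norm_num) (by norm_num) h1
    have h3 : ∀ a : ℝ≥0∞, a ^ ((2:ℝ≥0∞).toReal) = a ^ (2:ℕ) := by
      intro a
      rw [ENNReal.toReal_ofNat, ← ENNReal.rpow_natCast a 2]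
      norm_num
    simp_rw [h3] at h2
    exact h2.ne
  have hμ : μQHM = (volume : Measure ℝ).prod
      (((volume : Measure ℝ).restrict (Set.Ico (0:ℝ) 1)).prod Measure.count) := rfl
  have hslice : Measurable fun w : ℝ × ℝ × ℤ => ∑' n : ℤ, F (w.1, (w.2.1, n)) :=
    Measurable.ennreal_tsum fun n =>
      hFm.comp (measurable_fst.prodMk
        ((measurable_fst.comp measurable_snd).prodMk measurable_const))
  have hlayer : ∀ᵐ x ∂(volume : Measure ℝ),
      ∀ᵐ y ∂((volume : Measure ℝ).restrict (Set.Ico (0:ℝ) 1)),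
        (∑' n : ℤ, F (x, (y, n))) < ⊤ := by
    have h1 : ∀ᵐ x ∂(volume : Measure ℝ),
        ∫⁻ z, F (x, z) ∂(((volume : Measure ℝ).restrict (Set.Ico (0:ℝ) 1)).prod
          Measure.count) < ⊤ := by
      refine ae_lt_top hFm.lintegral_prod_right' ?_
      rw [← MeasureTheory.lintegral_prod F hFm.aemeasurable]
      exact hint
    filter_upwards [h1] with x hx
    have h2 : ∀ᵐ y ∂((volume : Measure ℝ).restrict (Set.Ico (0:ℝ) 1)),
        ∫⁻ n, F (x, (y, n)) ∂Measure.count < ⊤ := by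
      refine ae_lt_top ((hFm.comp measurable_prodMk_left).lintegral_prod_right') ?_
      have heq := MeasureTheory.lintegral_prod (μ := (volume : Measure ℝ).restrict (Set.Ico (0:ℝ) 1))
        (ν := (Measure.count : Measure ℤ)) (fun z : ℝ × ℤ => F (x, z))
        ((hFm.comp measurable_prodMk_left).aemeasurable)
      exact ne_of_lt (lt_of_le_of_lt (le_of_eq heq.symm) hx)
    filter_upwards [h2] with y hy
    rwa [lintegral_count] at hy
  have hQ : ∀ᵐ w ∂μQHM, (∑' n : ℤ, F (w.1, (w.2.1, n))) < ⊤ := by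
    rw [hμ, Measure.ae_prod_iff_ae_ae (measurableSet_lt hslice measurable_const)]
    filter_upwards [hlayer] with x hx
    rw [Measure.ae_prod_iff_ae_ae]
    · filter_upwards [hx] with y hy
      exact ae_of_all _ fun n => hy
    · exact measurableSet_lt (Measurable.ennreal_tsum fun n =>
        hFm.comp (measurable_const.prodMk (measurable_fst.prodMk measurable_const)))
        measurable_const
  filter_upwards [hQ, ae_shift hξG] with w hQw heq
  refine ⟨max 1 (∑' n : ℤ, F (w.1, (w.2.1, n))).toReal, fun n => ?_⟩
  rw [heq n]
  by_cases hle : ‖G (w.1, w.2.1, n)‖ ≤ 1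
  · exact le_trans hle (le_max_left _ _)
  · push_neg at hle
    refine le_trans ?_ (le_max_right _ _)
    have h1 : F (w.1, (w.2.1, n)) ≤ ∑' m : ℤ, F (w.1, (w.2.1, m)) := ENNReal.le_tsum n
    have h2 : (F (w.1, (w.2.1, n))).toReal ≤ (∑' m : ℤ, F (w.1, (w.2.1, m))).toReal :=
      ENNReal.toReal_mono hQw.ne h1
    have h3 : (F (w.1, (w.2.1, n))).toReal = ‖G (w.1, w.2.1, n)‖^2 := by
      simp [hF, ENNReal.toReal_pow]
    nlinarith [norm_nonneg (G (w.1, w.2.1, n))]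

lemma key_calc (hbar μ ν : ℝ) (Φ Ψ : ℝ → ℝ → ℤ → ℂ)
    (CΦ CΨ M : ℝ) (hCΦ0 : 0 ≤ CΦ) (hCΨ0 : 0 ≤ CΨ)
    (hCΦ : ∀ (x y : ℝ) (p : ℤ), ‖Φ x y p‖ ≤ CΦ * ((1:ℝ) + (p:ℝ)^2)⁻¹)
    (hCΨ : ∀ (x y : ℝ) (p : ℤ), ‖Ψ x y p‖ ≤ CΨ * ((1:ℝ) + (p:ℝ)^2)⁻¹)
    (ξf η : ℝ × ℝ × ℤ → ℂ) (x y : ℝ) (p : ℤ)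
    (hM : ∀ n : ℤ, ‖ξf (x, y, n)‖ ≤ M)
    (hη : ∀ n : ℤ, η (x, y, n) =
      ∑' s : ℤ, Ψ (x - hbar * ((s:ℝ) - 2*(n:ℝ)) * μ) (y - hbar * ((s:ℝ) - 2*(n:ℝ)) * ν) s *
        ξf (x, y, n - s)) :
    (∑' q : ℤ, starProd hbar μ ν Φ Ψ (x - hbar * ((q:ℝ) - 2*(p:ℝ)) * μ)
        (y - hbar * ((q:ℝ) - 2*(p:ℝ)) * ν) q * ξf (x, y, p - q)) =
    ∑' q : ℤ, Φ (x - hbar * ((q:ℝ) - 2*(p:ℝ)) * μ) (y - hbar * ((q:ℝ) - 2*(p:ℝ)) * ν) q *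
      η (x, y, p - q) := by
  set A : ℤ → ℤ → ℂ := fun q r =>
    Φ (x - hbar * ((r:ℝ) - 2*(p:ℝ)) * μ) (y - hbar * ((r:ℝ) - 2*(p:ℝ)) * ν) r *
      (Ψ (x - hbar * ((q:ℝ) + (r:ℝ) - 2*(p:ℝ)) * μ)
        (y - hbar * ((q:ℝ) + (r:ℝ) - 2*(p:ℝ)) * ν) (q - r) *
        ξf (x, y, p - q)) with hA
  have hAs : Summable (Function.uncurry A) := by
    refine Summable.of_norm_bounded
      (g := fun v : ℤ × ℤ => (CΦ * CΨ * M) *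
        (((1:ℝ) + (v.2:ℝ)^2)⁻¹ * ((1:ℝ) + (((v.1 - v.2 : ℤ)):ℝ)^2)⁻¹))
      (summable_base.mul_left _) ?_
    rintro ⟨q, r⟩
    have h1 := hCΦ (x - hbar * ((r:ℝ) - 2*(p:ℝ)) * μ) (y - hbar * ((r:ℝ) - 2*(p:ℝ)) * ν) r
    have h2 := hCΨ (x - hbar * ((q:ℝ) + (r:ℝ) - 2*(p:ℝ)) * μ)
      (y - hbar * ((q:ℝ) + (r:ℝ) - 2*(p:ℝ)) * ν) (q - r)
    have h3 := hM (p - q)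
    have hb1 : (0:ℝ) ≤ ((1:ℝ) + ((r:ℤ):ℝ)^2)⁻¹ := by positivity
    have hb2 : (0:ℝ) ≤ ((1:ℝ) + (((q - r : ℤ)):ℝ)^2)⁻¹ := by positivity
    calc ‖Function.uncurry A (q, r)‖
        = ‖Φ (x - hbar * ((r:ℝ) - 2*(p:ℝ)) * μ) (y - hbar * ((r:ℝ) - 2*(p:ℝ)) * ν) r‖ *
          (‖Ψ (x - hbar * ((q:ℝ) + (r:ℝ) - 2*(p:ℝ)) * μ)
            (y - hbar * ((q:ℝ) + (r:ℝ) - 2*(p:ℝ)) * ν) (q - r)‖ * ‖ξf (x, y, p - q)‖) := by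
          simp [Function.uncurry, hA, norm_mul]
      _ ≤ (CΦ * ((1:ℝ) + ((r:ℤ):ℝ)^2)⁻¹) *
          ((CΨ * ((1:ℝ) + (((q - r : ℤ)):ℝ)^2)⁻¹) * M) := by
          refine mul_le_mul h1 ?_ (mul_nonneg (norm_nonneg _) (norm_nonneg _))
            (mul_nonneg hCΦ0 hb1)
          exact mul_le_mul h2 h3 (norm_nonneg _) (mul_nonneg hCΨ0 hb2)
      _ = (CΦ * CΨ * M) *
          (((1:ℝ) + ((r:ℤ):ℝ)^2)⁻¹ * ((1:ℝ) + (((q - r : ℤ)):ℝ)^2)⁻¹) := by ring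
  have step1 : (∑' q : ℤ, starProd hbar μ ν Φ Ψ (x - hbar * ((q:ℝ) - 2*(p:ℝ)) * μ)
      (y - hbar * ((q:ℝ) - 2*(p:ℝ)) * ν) q * ξf (x, y, p - q)) =
      ∑' q : ℤ, ∑' r : ℤ, A q r := by
    refine tsum_congr fun q => ?_
    rw [starProd]
    rw [← tsum_mul_right]
    refine tsum_congr fun r => ?_
    simp only [hA]
    push_cast
    ring_nf
  have step2 : (∑' q : ℤ, Φ (x - hbar * ((q:ℝ) - 2*(p:ℝ)) * μ)
      (y - hbar * ((q:ℝ) - 2*(p:ℝ)) * ν) q * η (x, y, p - q)) =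
      ∑' r : ℤ, ∑' q : ℤ, A q r := by
    refine tsum_congr fun r => ?_
    rw [hη (p - r), ← tsum_mul_left, ← Equiv.tsum_eq (Equiv.subRight r)]
    refine tsum_congr fun q => ?_
    simp only [hA, Equiv.subRight_apply]
    push_cast
    ring_nf
  have step3 : ∑' r : ℤ, ∑' q : ℤ, A q r = ∑' q : ℤ, ∑' r : ℤ, A q r := Summable.tsum_comm hAs
  rw [step1, step2]
  exact step3.symm


/-- `π` is multiplicative: `π(Φ★Ψ) = π(Φ) ∘ π(Ψ)`. -/
theorem rep_mul (c : ℕ) (hc : 0 < c) (hbar μ ν : ℝ)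
    (hμν : μ ^ 2 + ν ^ 2 ≠ 0) (Φ Ψ : ℝ → ℝ → ℤ → ℂ) (hΦ : IsSc c Φ) (hΨ : IsSc c Ψ)
    (T₁ T₂ T₃ : Lp ℂ 2 μQHM →L[ℂ] Lp ℂ 2 μQHM)
    (h₁ : RepOf hbar μ ν Φ T₁) (h₂ : RepOf hbar μ ν Ψ T₂)
    (h₃ : RepOf hbar μ ν (starProd hbar μ ν Φ Ψ) T₃) :
    T₃ = T₁.comp T₂ := by
  obtain ⟨CΦ, hCΦ0, hCΦb⟩ := Sc_bound hΦ
  obtain ⟨CΨ, hCΨ0, hCΨb⟩ := Sc_bound hΨ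
  refine ContinuousLinearMap.ext fun ξ => ?_
  rw [ContinuousLinearMap.comp_apply]
  apply Lp.ext
  refine (h₃ ξ).trans (Filter.EventuallyEq.trans ?_ (h₁ (T₂ ξ)).symm)
  filter_upwards [ae_shift (h₂ ξ), ae_slice_bound ξ] with w hw hb
  obtain ⟨M, hM⟩ := hb
  exact key_calc hbar μ ν Φ Ψ CΦ CΨ M hCΦ0 hCΨ0 hCΦb hCΨb _ _ w.1 w.2.1 w.2.2 hM hw
end
end

section
/- Each L_{(r,s,t)} is a *-automorphism of the algebra (S^c, ★, *): for all Φ, Ψ ∈ S^c and all (r,s,t) ∈ ℝ³, L_{(r,s,t)}(Φ★Ψ) = (L_{(r,s,t)}Φ) ★ (L_{(r,s,t)}Ψ) and L_{(r,s,t)}(Φ*) = (L_{(r,s,t)}Φ)*. -/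
open MeasureTheory Complex

noncomputable section

lemma expi_add (a b : ℝ) : expi (a + b) = expi a * expi b := by
  simp only [expi, ← Complex.exp_add]
  congr 1
  push_cast
  ring

lemma conj_expi (a : ℝ) : (starRingEnd ℂ) (expi a) = expi (-a) := by
  simp only [expi, ← Complex.exp_conj]
  congr 1
  simp only [map_mul, Complex.conj_I, Complex.conj_ofReal, map_ofNat, Complex.ofReal_neg]
  ring

/-- each `L_{(r,s,t)}` is a `*`-automorphism of `(S^c, ★, *)`. -/
theorem Lact_star_automorphism (c : ℕ) (hc : 0 < c) (hbar μ ν : ℝ)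
    (hμν : μ ^ 2 + ν ^ 2 ≠ 0) (Φ Ψ : ℝ → ℝ → ℤ → ℂ) (hΦ : IsSc c Φ) (hΨ : IsSc c Ψ)
    (g : ℝ × ℝ × ℝ) :
    Lact c g (starProd hbar μ ν Φ Ψ) = starProd hbar μ ν (Lact c g Φ) (Lact c g Ψ) ∧
    Lact c g (invol Φ) = invol (Lact c g Φ) := by
  constructor
  · funext x y p
    simp only [Lact, starProd]
    rw [← tsum_mul_left]
    apply tsum_congr
    intro q
    have h1 : x - g.1 - hbar * ((q : ℝ) - (p : ℝ)) * μ
        = x - hbar * ((q : ℝ) - (p : ℝ)) * μ - g.1 := by ring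
    have h2 : y - g.2.1 - hbar * ((q : ℝ) - (p : ℝ)) * ν
        = y - hbar * ((q : ℝ) - (p : ℝ)) * ν - g.2.1 := by ring
    have h3 : x - g.1 - hbar * (q : ℝ) * μ = x - hbar * (q : ℝ) * μ - g.1 := by ring
    have h4 : y - g.2.1 - hbar * (q : ℝ) * ν = y - hbar * (q : ℝ) * ν - g.2.1 := by ring
    rw [h1, h2, h3, h4]
    have hph : (p : ℝ) * (g.2.2 + (c : ℝ) * g.2.1 * (x - g.1))
        = (q : ℝ) * (g.2.2 + (c : ℝ) * g.2.1 * (x - hbar * ((q : ℝ) - (p : ℝ)) * μ - g.1))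
          + ((p - q : ℤ) : ℝ) * (g.2.2 + (c : ℝ) * g.2.1 * (x - hbar * (q : ℝ) * μ - g.1)) := by
      push_cast
      ring
    rw [hph, expi_add]
    ring
  · funext x y p
    simp only [Lact, invol, map_mul, conj_expi]
    congr 2
    push_cast
    ring
end
end
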